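/- arXiv:1401.5367 — 4 statements merged into one kernel-verified Lean document; each statement's English description precedes it below -/
import Mathlib

section
/- For any feature set with selected part S ⊆ FL and any natural number t, the number of t-sets covered by S equals the binomial coefficient C(|FL|, t). -/
/-- For any feature set with selected part `S ⊆ FL` and any natural number
`t`, the number of `t`-sets covered by `S` equals the binomial coefficient `C(|FL|, t)`. -/
theorem card_covered_tSets {α : Type*} [DecidableEq α] (FL S : Finset α) (hS : S ⊆ FL)
    (t : ℕ) :
    ((FL.powerset ×ˢ FL.powerset).filter
        (fun p : Finset α × Finset α =>
          Disjoint p.1 p.2 ∧ p.1 ∪ p.2 ⊆ FL ∧ (p.1 ∪ p.2).card = t ∧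
          p.1 ⊆ S ∧ p.2 ⊆ FL \ S)).card
      = Nat.choose FL.card t := by
  rw [← Finset.card_powersetCard]
  apply Finset.card_bij (fun p _ => p.1 ∪ p.2)
  · intro p hp
    simp only [Finset.mem_filter] at hp
    rw [Finset.mem_powersetCard]
    exact ⟨hp.2.2.1, hp.2.2.2.1⟩
  · intro p hp q hq h
    simp only [Finset.mem_filter] at hp hq
    obtain ⟨-, -, -, -, hpS, hpC⟩ := hp
    obtain ⟨-, -, -, -, hqS, hqC⟩ := hq
    have key : ∀ (A B : Finset α), A ⊆ S → B ⊆ FL \ S → (A ∪ B) ∩ S = A := by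
      intro A B hA hB
      have hBS : B ∩ S = ∅ :=
        Finset.disjoint_iff_inter_eq_empty.mp (Finset.disjoint_of_subset_right hB Finset.disjoint_sdiff).symm
      rw [Finset.union_inter_distrib_right, Finset.inter_eq_left.mpr hA, hBS,
        Finset.union_empty]
    have key2 : ∀ (A B : Finset α), A ⊆ S → B ⊆ FL \ S → (A ∪ B) \ S = B := by
      intro A B hA hB
      rw [Finset.union_sdiff_distrib,
        Finset.sdiff_eq_empty_iff_subset.mpr hA,
        Finset.sdiff_eq_self_iff_disjoint.mpr
          (Finset.disjoint_of_subset_left hB (Finset.sdiff_disjoint))]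
      simp
    have h1 := (key p.1 p.2 hpS hpC).symm.trans (h ▸ key q.1 q.2 hqS hqC)
    have h2 := (key2 p.1 p.2 hpS hpC).symm.trans (h ▸ key2 q.1 q.2 hqS hqC)
    exact Prod.ext h1 h2
  · intro C hC
    rw [Finset.mem_powersetCard] at hC
    refine ⟨(C ∩ S, C \ S), ?_, ?_⟩
    · simp only [Finset.mem_filter, Finset.mem_product, Finset.mem_powerset]
      have hcup : C ∩ S ∪ C \ S = C := by
        ext x; simp only [Finset.mem_union, Finset.mem_inter, Finset.mem_sdiff]; tauto
      refine ⟨⟨(Finset.inter_subset_left).trans hC.1,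
        (Finset.sdiff_subset).trans hC.1⟩, ?_, ?_, ?_, Finset.inter_subset_right, ?_⟩
      · exact Finset.disjoint_of_subset_left Finset.inter_subset_right Finset.disjoint_sdiff
      · rw [hcup]; exact hC.1
      · rw [hcup]; exact hC.2
      · intro x hx
        rw [Finset.mem_sdiff] at hx ⊢
        exact ⟨hC.1 hx.1, hx.2⟩
    · show C ∩ S ∪ C \ S = C
      ext x; simp only [Finset.mem_union, Finset.mem_inter, Finset.mem_sdiff]; tauto
end

section
/- Let V be a finite collection of valid feature sets (each an element S ⊆ FL), let TS be the finite set of all 2-sets covered by at least one member of V, and let tCA be a finite set of feature sets with tCA ⊆ V. Then the total occurrence count Σ_{ts ∈ TS} occurrence(ts, tCA) equals |tCA| · |FL| · (|FL| − 1) / 2. -/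
/-- Let `V` be a finite collection of valid feature sets (each an element
`S ⊆ FL`), let `TS` be the finite set of all 2-sets covered by at least one member of
`V`, and let `tCA` be a finite set of feature sets with `tCA ⊆ V`. Then the total
occurrence count `Σ_{ts ∈ TS} occurrence(ts, tCA)` equals `|tCA| * |FL| * (|FL| - 1) / 2`. -/
theorem total_occurrence_count {α : Type*} [DecidableEq α] (FL : Finset α)
    (V : Finset (Finset α)) (hV : ∀ S ∈ V, S ⊆ FL)
    (tCA : Finset (Finset α)) (htCA : tCA ⊆ V)
    (TS : Finset (Finset α × Finset α))
    (hTS : TS = (FL.powerset ×ˢ FL.powerset).filter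
        (fun p : Finset α × Finset α =>
          Disjoint p.1 p.2 ∧ p.1 ∪ p.2 ⊆ FL ∧ (p.1 ∪ p.2).card = 2 ∧
          ∃ S ∈ V, p.1 ⊆ S ∧ p.2 ⊆ FL \ S)) :
    ∑ ts ∈ TS, (tCA.filter (fun S => ts.1 ⊆ S ∧ ts.2 ⊆ FL \ S)).card
      = tCA.card * FL.card * (FL.card - 1) / 2 := by
  classical
  have hswap : ∑ ts ∈ TS, (tCA.filter (fun S => ts.1 ⊆ S ∧ ts.2 ⊆ FL \ S)).card
      = ∑ S ∈ tCA, (TS.filter (fun ts => ts.1 ⊆ S ∧ ts.2 ⊆ FL \ S)).card := by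
    simp only [Finset.card_filter]
    rw [Finset.sum_comm]
  rw [hswap]
  have hun : ∀ T S : Finset α, T ∩ S ∪ T \ S = T := by
    intro T S
    ext x
    simp only [Finset.mem_union, Finset.mem_inter, Finset.mem_sdiff]
    tauto
  have hcount : ∀ S ∈ tCA,
      (TS.filter (fun ts => ts.1 ⊆ S ∧ ts.2 ⊆ FL \ S)).card = FL.card.choose 2 := by
    intro S hS
    rw [← Finset.card_powersetCard 2 FL]
    apply Finset.card_bij' (fun ts _ => ts.1 ∪ ts.2) (fun T _ => (T ∩ S, T \ S))
    · intro ts hts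
      rw [Finset.mem_filter, hTS, Finset.mem_filter] at hts
      obtain ⟨⟨_, _, hsub, hcard, _⟩, _, _⟩ := hts
      exact Finset.mem_powersetCard.2 ⟨hsub, hcard⟩
    · intro T hT
      rw [Finset.mem_powersetCard] at hT
      obtain ⟨hTFL, hT2⟩ := hT
      rw [Finset.mem_filter, hTS, Finset.mem_filter]
      have h1 : T ∩ S ⊆ FL := (Finset.inter_subset_left).trans hTFL
      have h2 : T \ S ⊆ FL \ S := Finset.sdiff_subset_sdiff hTFL le_rfl
      refine ⟨⟨Finset.mk_mem_product (Finset.mem_powerset.2 h1)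
          (Finset.mem_powerset.2 (h2.trans (Finset.sdiff_subset))),
        Finset.disjoint_sdiff.mono_left Finset.inter_subset_right, ?_, ?_, ?_⟩,
        Finset.inter_subset_right, h2⟩
      · rw [hun]; exact hTFL
      · rw [hun]; exact hT2
      · exact ⟨S, htCA hS, Finset.inter_subset_right, h2⟩
    · intro ts hts
      rw [Finset.mem_filter, hTS, Finset.mem_filter] at hts
      obtain ⟨⟨_, hdisj, _, _, _⟩, h1, h2⟩ := hts
      have e1 : (ts.1 ∪ ts.2) ∩ S = ts.1 := by
        ext x
        simp only [Finset.mem_inter, Finset.mem_union]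
        constructor
        · rintro ⟨hx | hx, hxS⟩
          · exact hx
          · exact absurd hxS (Finset.mem_sdiff.1 (h2 hx)).2
        · intro hx; exact ⟨Or.inl hx, h1 hx⟩
      have e2 : (ts.1 ∪ ts.2) \ S = ts.2 := by
        ext x
        simp only [Finset.mem_sdiff, Finset.mem_union]
        constructor
        · rintro ⟨hx | hx, hxS⟩
          · exact absurd (h1 hx) hxS
          · exact hx
        · intro hx; exact ⟨Or.inr hx, (Finset.mem_sdiff.1 (h2 hx)).2⟩
      exact Prod.ext e1 e2
    · intro T hT
      exact hun T S
  rw [Finset.sum_congr rfl hcount, Finset.sum_const, smul_eq_mul,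
    Nat.choose_two_right, mul_assoc,
    Nat.mul_div_assoc tCA.card (Nat.even_mul_pred_self FL.card).two_dvd]
end

section
/- Let V be a finite collection of valid feature sets (each an element S ⊆ FL), let TS be the finite set of all 2-sets covered by at least one member of V, and let tCA be a nonempty finite set of feature sets with tCA ⊆ V; assume TS is nonempty. Then the average tuple frequency (1/|TS|) · Σ_{ts ∈ TS} occurrence(ts, tCA)/|tCA| (computed over the rationals) equals |FL| · (|FL| − 1) / (2 · |TS|); in particular it depends only on the number of features |FL| and the number of valid 2-sets |TS|, and not on the choice of tCA. -/
lemma cover_count {α : Type*} [DecidableEq α] (FL : Finset α)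
    (V : Finset (Finset α)) (hV : ∀ S ∈ V, S ⊆ FL)
    (TS : Finset (Finset α × Finset α))
    (hTS : TS = (FL.powerset ×ˢ FL.powerset).filter
        (fun p : Finset α × Finset α =>
          Disjoint p.1 p.2 ∧ p.1 ∪ p.2 ⊆ FL ∧ (p.1 ∪ p.2).card = 2 ∧
          ∃ S ∈ V, p.1 ⊆ S ∧ p.2 ⊆ FL \ S))
    (S : Finset α) (hS : S ∈ V) :
    (TS.filter (fun ts => ts.1 ⊆ S ∧ ts.2 ⊆ FL \ S)).card = Nat.choose FL.card 2 := by
  rw [← Finset.card_powersetCard 2 FL]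
  apply Finset.card_bij (fun p _ => p.1 ∪ p.2)
  · intro p hp
    simp only [hTS, Finset.mem_filter] at hp
    simp only [Finset.mem_powersetCard]
    exact ⟨hp.1.2.2.1, hp.1.2.2.2.1⟩
  · intro p hp q hq hpq
    simp only [hTS, Finset.mem_filter, Finset.mem_product, Finset.mem_powerset] at hp hq
    obtain ⟨⟨_, _, _, _⟩, hpA, hpB⟩ := hp
    obtain ⟨⟨_, _, _, _⟩, hqA, hqB⟩ := hq
    have key : ∀ (A B : Finset α), A ⊆ S → B ⊆ FL \ S → A = (A ∪ B) ∩ S ∧ B = (A ∪ B) \ S := by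
      intro A B hA hB
      constructor
      · ext x
        simp only [Finset.mem_inter, Finset.mem_union]
        constructor
        · intro hx; exact ⟨Or.inl hx, hA hx⟩
        · rintro ⟨hx | hx, hxS⟩
          · exact hx
          · exact absurd hxS (Finset.mem_sdiff.mp (hB hx)).2
      · ext x
        simp only [Finset.mem_sdiff, Finset.mem_union]
        constructor
        · intro hx; exact ⟨Or.inr hx, (Finset.mem_sdiff.mp (hB hx)).2⟩
        · rintro ⟨hx | hx, hxS⟩
          · exact absurd (hA hx) hxS
          · exact hx
    obtain ⟨e1, e2⟩ := key p.1 p.2 hpA hpB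
    obtain ⟨e3, e4⟩ := key q.1 q.2 hqA hqB
    have : p.1 = q.1 := by rw [e1, e3, hpq]
    have : p.2 = q.2 := by rw [e2, e4, hpq]
    exact Prod.ext ‹p.1 = q.1› ‹p.2 = q.2›
  · intro C hC
    simp only [Finset.mem_powersetCard] at hC
    refine ⟨(C ∩ S, C \ S), ?_, ?_⟩
    · simp only [hTS, Finset.mem_filter, Finset.mem_product, Finset.mem_powerset]
      have hu : C ∩ S ∪ C \ S = C := by
        ext x; simp only [Finset.mem_union, Finset.mem_inter, Finset.mem_sdiff]; tauto
      have h1 : C ∩ S ⊆ FL := (Finset.inter_subset_left).trans hC.1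
      have h2 : C \ S ⊆ FL := (Finset.sdiff_subset).trans hC.1
      have h3 : Disjoint (C ∩ S) (C \ S) :=
        Finset.disjoint_sdiff.mono_left Finset.inter_subset_right
      have h4 : C ∩ S ∪ C \ S ⊆ FL := by rw [hu]; exact hC.1
      have h5 : (C ∩ S ∪ C \ S).card = 2 := by rw [hu]; exact hC.2
      have h6 : ∃ S' ∈ V, C ∩ S ⊆ S' ∧ C \ S ⊆ FL \ S' :=
        ⟨S, hS, Finset.inter_subset_right, fun x hx => Finset.mem_sdiff.mpr
          ⟨hC.1 (Finset.mem_sdiff.mp hx).1, (Finset.mem_sdiff.mp hx).2⟩⟩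
      have h7 : C ∩ S ⊆ S := Finset.inter_subset_right
      have h8 : C \ S ⊆ FL \ S := fun x hx => Finset.mem_sdiff.mpr
        ⟨hC.1 (Finset.mem_sdiff.mp hx).1, (Finset.mem_sdiff.mp hx).2⟩
      exact ⟨⟨⟨h1, h2⟩, h3, h4, h5, h6⟩, h7, h8⟩
    · ext x; simp only [Finset.mem_union, Finset.mem_inter, Finset.mem_sdiff]; tauto

/-- Let `V` be a finite collection of valid feature sets (each an element
`S ⊆ FL`), let `TS` be the finite set of all 2-sets covered by at least one member of
`V`, and let `tCA` be a nonempty finite set of feature sets with `tCA ⊆ V`; assume `TS`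
is nonempty. Then the average tuple frequency
`(1/|TS|) * Σ_{ts ∈ TS} occurrence(ts, tCA)/|tCA|` (computed over the rationals) equals
`|FL| * (|FL| - 1) / (2 * |TS|)`; in particular it depends only on `|FL|` and `|TS|`,
and not on the choice of `tCA`. -/
theorem average_tuple_frequency {α : Type*} [DecidableEq α] (FL : Finset α)
    (V : Finset (Finset α)) (hV : ∀ S ∈ V, S ⊆ FL)
    (tCA : Finset (Finset α)) (htCA : tCA ⊆ V) (htCAne : tCA.Nonempty)
    (TS : Finset (Finset α × Finset α))
    (hTS : TS = (FL.powerset ×ˢ FL.powerset).filter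
        (fun p : Finset α × Finset α =>
          Disjoint p.1 p.2 ∧ p.1 ∪ p.2 ⊆ FL ∧ (p.1 ∪ p.2).card = 2 ∧
          ∃ S ∈ V, p.1 ⊆ S ∧ p.2 ⊆ FL \ S))
    (hTSne : TS.Nonempty) :
    (1 / (TS.card : ℚ)) *
        ∑ ts ∈ TS,
          ((tCA.filter (fun S => ts.1 ⊆ S ∧ ts.2 ⊆ FL \ S)).card : ℚ) / (tCA.card : ℚ)
      = (FL.card : ℚ) * ((FL.card : ℚ) - 1) / (2 * (TS.card : ℚ)) := by
  have hT0 : (TS.card : ℚ) ≠ 0 := Nat.cast_ne_zero.mpr (Finset.card_ne_zero.mpr hTSne)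
  have hc0 : (tCA.card : ℚ) ≠ 0 := Nat.cast_ne_zero.mpr (Finset.card_ne_zero.mpr htCAne)
  have hn : ∑ ts ∈ TS, (tCA.filter (fun S => ts.1 ⊆ S ∧ ts.2 ⊆ FL \ S)).card
      = tCA.card * Nat.choose FL.card 2 := by
    have h1 : ∑ ts ∈ TS, (tCA.filter (fun S => ts.1 ⊆ S ∧ ts.2 ⊆ FL \ S)).card
        = ∑ S ∈ tCA, (TS.filter (fun ts => ts.1 ⊆ S ∧ ts.2 ⊆ FL \ S)).card := by
      simp_rw [Finset.card_filter]
      rw [Finset.sum_comm]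
    rw [h1, Finset.sum_congr rfl (fun S hSm =>
      cover_count FL V hV TS hTS S (htCA hSm)), Finset.sum_const, smul_eq_mul]
  have hsum : ∑ ts ∈ TS, ((tCA.filter (fun S => ts.1 ⊆ S ∧ ts.2 ⊆ FL \ S)).card : ℚ)
      = (tCA.card : ℚ) * (Nat.choose FL.card 2 : ℚ) := by
    rw [← Nat.cast_sum, hn]; push_cast; ring
  rw [← Finset.sum_div, hsum, mul_comm, Nat.cast_choose_two]
  field_simp
end

section
/- Let V be a finite collection of valid feature sets (each an element S ⊆ FL) and let TS be the finite set of all 2-sets covered by at least one member of V. If tCA₁ and tCA₂ are two nonempty finite sets of feature sets with tCA₁ ⊆ V and tCA₂ ⊆ V, and TS is nonempty, then their average tuple frequencies coincide: (1/|TS|) · Σ_{ts ∈ TS} occurrence(ts, tCA₁)/|tCA₁| = (1/|TS|) · Σ_{ts ∈ TS} occurrence(ts, tCA₂)/|tCA₂| (computed over the rationals). -/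
lemma covered_count {α : Type*} [DecidableEq α] (FL : Finset α)
    (V : Finset (Finset α)) (hV : ∀ S ∈ V, S ⊆ FL)
    (TS : Finset (Finset α × Finset α))
    (hTS : TS = (FL.powerset ×ˢ FL.powerset).filter
        (fun p : Finset α × Finset α =>
          Disjoint p.1 p.2 ∧ p.1 ∪ p.2 ⊆ FL ∧ (p.1 ∪ p.2).card = 2 ∧
          ∃ S ∈ V, p.1 ⊆ S ∧ p.2 ⊆ FL \ S))
    (S : Finset α) (hS : S ∈ V) :
    (TS.filter (fun ts => ts.1 ⊆ S ∧ ts.2 ⊆ FL \ S)).card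
      = (FL.powerset.filter (fun p => p.card = 2)).card := by
  have key : ∀ a : Finset α × Finset α, a ∈ TS.filter (fun ts => ts.1 ⊆ S ∧ ts.2 ⊆ FL \ S) →
      a.1 = (a.1 ∪ a.2) ∩ S ∧ a.2 = (a.1 ∪ a.2) \ S := by
    intro a ha
    simp only [Finset.mem_filter, hTS, Finset.mem_product, Finset.mem_powerset] at ha
    obtain ⟨⟨_, _, _, _, _⟩, ha1, ha2⟩ := ha
    constructor
    · ext x
      simp only [Finset.mem_inter, Finset.mem_union]
      constructor
      · intro hx; exact ⟨Or.inl hx, ha1 hx⟩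
      · rintro ⟨hx | hx, hxs⟩
        · exact hx
        · exact absurd hxs (Finset.mem_sdiff.mp (ha2 hx)).2
    · ext x
      simp only [Finset.mem_sdiff, Finset.mem_union]
      constructor
      · intro hx; exact ⟨Or.inr hx, (Finset.mem_sdiff.mp (ha2 hx)).2⟩
      · rintro ⟨hx | hx, hxs⟩
        · exact absurd (ha1 hx) hxs
        · exact hx
  apply Finset.card_bij (fun ts _ => ts.1 ∪ ts.2)
  · intro ts hts
    have := hts
    simp only [Finset.mem_filter, hTS, Finset.mem_product, Finset.mem_powerset] at this ⊢
    obtain ⟨⟨_, _, h3, h4, _⟩, _⟩ := this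
    exact ⟨h3, h4⟩
  · intro a ha b hb hab
    obtain ⟨ha1, ha2⟩ := key a ha
    obtain ⟨hb1, hb2⟩ := key b hb
    have e1 : a.1 = b.1 := by rw [ha1, hab, ← hb1]
    have e2 : a.2 = b.2 := by rw [ha2, hab, ← hb2]
    exact Prod.ext e1 e2
  · intro p hp
    simp only [Finset.mem_filter, Finset.mem_powerset] at hp
    have hu : p ∩ S ∪ p \ S = p := by
      ext x; simp only [Finset.mem_union, Finset.mem_inter, Finset.mem_sdiff]; tauto
    refine ⟨(p ∩ S, p \ S), ?_, hu⟩
    have hdisj : Disjoint (p ∩ S) (p \ S) := by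
      rw [Finset.disjoint_left]
      intro x hx1 hx2
      exact (Finset.mem_sdiff.mp hx2).2 (Finset.mem_inter.mp hx1).2
    have hsd : p \ S ⊆ FL \ S := by
      intro x hx
      rw [Finset.mem_sdiff] at hx ⊢
      exact ⟨hp.1 hx.1, hx.2⟩
    simp only [Finset.mem_filter, hTS, Finset.mem_product, Finset.mem_powerset]
    refine ⟨⟨⟨Finset.inter_subset_left.trans hp.1, Finset.sdiff_subset.trans hp.1⟩,
      hdisj, ?_, ?_, S, hS, Finset.inter_subset_right, hsd⟩,
      Finset.inter_subset_right, hsd⟩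
    · rw [hu]; exact hp.1
    · rw [hu]; exact hp.2

lemma avg_sum_eq {α : Type*} [DecidableEq α] (FL : Finset α)
    (V : Finset (Finset α)) (hV : ∀ S ∈ V, S ⊆ FL)
    (TS : Finset (Finset α × Finset α))
    (hTS : TS = (FL.powerset ×ˢ FL.powerset).filter
        (fun p : Finset α × Finset α =>
          Disjoint p.1 p.2 ∧ p.1 ∪ p.2 ⊆ FL ∧ (p.1 ∪ p.2).card = 2 ∧
          ∃ S ∈ V, p.1 ⊆ S ∧ p.2 ⊆ FL \ S))
    (tCA : Finset (Finset α)) (htCA : tCA ⊆ V) (hne : tCA.Nonempty) :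
    ∑ ts ∈ TS, ((tCA.filter (fun S => ts.1 ⊆ S ∧ ts.2 ⊆ FL \ S)).card : ℚ) / (tCA.card : ℚ)
      = ((FL.powerset.filter (fun p => p.card = 2)).card : ℚ) := by
  have hcard : (tCA.card : ℚ) ≠ 0 := by
    exact_mod_cast (Finset.card_pos.mpr hne).ne'
  have hswap : ∑ ts ∈ TS, ((tCA.filter (fun S => ts.1 ⊆ S ∧ ts.2 ⊆ FL \ S)).card : ℚ)
      = ∑ S ∈ tCA, ((TS.filter (fun ts => ts.1 ⊆ S ∧ ts.2 ⊆ FL \ S)).card : ℚ) := by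
    simp only [Finset.card_filter]
    push_cast
    rw [Finset.sum_comm]
  rw [← Finset.sum_div, hswap]
  have : ∀ S ∈ tCA, ((TS.filter (fun ts => ts.1 ⊆ S ∧ ts.2 ⊆ FL \ S)).card : ℚ)
      = ((FL.powerset.filter (fun p => p.card = 2)).card : ℚ) := by
    intro S hS
    exact_mod_cast congrArg (Nat.cast (R := ℚ)) (covered_count FL V hV TS hTS S (htCA hS))
  rw [Finset.sum_congr rfl this, Finset.sum_const, nsmul_eq_mul]
  field_simp




/-- Let `V` be a finite collection of valid feature sets (each an element
`S ⊆ FL`) and let `TS` be the finite set of all 2-sets covered by at least one member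
of `V`. If `tCA₁` and `tCA₂` are two nonempty finite sets of feature sets with
`tCA₁ ⊆ V` and `tCA₂ ⊆ V`, and `TS` is nonempty, then their average tuple frequencies
coincide (computed over the rationals). -/
theorem average_tuple_frequency_indep {α : Type*} [DecidableEq α] (FL : Finset α)
    (V : Finset (Finset α)) (hV : ∀ S ∈ V, S ⊆ FL)
    (tCA₁ tCA₂ : Finset (Finset α))
    (htCA₁ : tCA₁ ⊆ V) (htCA₁ne : tCA₁.Nonempty)
    (htCA₂ : tCA₂ ⊆ V) (htCA₂ne : tCA₂.Nonempty)
    (TS : Finset (Finset α × Finset α))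
    (hTS : TS = (FL.powerset ×ˢ FL.powerset).filter
        (fun p : Finset α × Finset α =>
          Disjoint p.1 p.2 ∧ p.1 ∪ p.2 ⊆ FL ∧ (p.1 ∪ p.2).card = 2 ∧
          ∃ S ∈ V, p.1 ⊆ S ∧ p.2 ⊆ FL \ S))
    (hTSne : TS.Nonempty) :
    (1 / (TS.card : ℚ)) *
        ∑ ts ∈ TS,
          ((tCA₁.filter (fun S => ts.1 ⊆ S ∧ ts.2 ⊆ FL \ S)).card : ℚ) / (tCA₁.card : ℚ)
      = (1 / (TS.card : ℚ)) *
        ∑ ts ∈ TS,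
          ((tCA₂.filter (fun S => ts.1 ⊆ S ∧ ts.2 ⊆ FL \ S)).card : ℚ) / (tCA₂.card : ℚ) := by
  rw [avg_sum_eq FL V hV TS hTS tCA₁ htCA₁ htCA₁ne,
    avg_sum_eq FL V hV TS hTS tCA₂ htCA₂ htCA₂ne]
end
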